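/- arXiv:2006.16505 — 5 statements merged into one kernel-verified Lean document; each statement's English description precedes it below -/
import Mathlib

section
/- Let g_s and g_w be independent random variables, each with an α-μ distribution having CDF F_{g_i}(x) = 1 − exp(−μ x^{α/2}/Ω_i^α) Σ_{j=0}^{μ−1} μ^j x^{jα/2}/(j! Ω_i^{jα}), i ∈ {s, w}, where α, μ ∈ ℤ₊ and Ω_s, Ω_w > 0. Then g_min = min{g_s, g_w} has PDF f_{g_min}(x) = (α exp(−μ x^{α/2}/Ω̃))/(2 Ω_s^{αμ} Γ(μ)) Σ_{m=0}^{μ−1} μ^{μ+m} x^{α(μ+m)/2 − 1}/(m! Ω_w^{mα}) + (α exp(−μ x^{α/2}/Ω̃))/(2 Ω_w^{αμ} Γ(μ)) Σ_{n=0}^{μ−1} μ^{μ+n} x^{α(μ+n)/2 − 1}/(n! Ω_s^{nα}), where 1/Ω̃ = 1/Ω_s^α + 1/Ω_w^α. -/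
open MeasureTheory Real

/-!
With `s = μ x^(α/2) / Ω^α`, the α-μ tail `1 - F(x)` is the Erlang tail `e^(-s) ∑_{j<μ} s^j / j!`,
whose derivative in `s` telescopes to `-e^(-s) s^(μ-1) / (μ-1)!`. By independence
`P(min ≤ x) = 1 - T_s(x) T_w(x)`, and the product rule turns `-(T_s T_w)'` into the two sums of the
claimed density. This derivative is nonnegative, hence integrable, so the fundamental theorem of
calculus identifies the law of the minimum with the density through its CDF.
-/

open Finset Set ProbabilityTheory
open scoped Nat

noncomputable section

def expPartialSum (n : ℕ) (s : ℝ) : ℝ := ∑ j ∈ range n, s ^ j / j !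

theorem expPartialSum_succ (n : ℕ) (s : ℝ) :
    expPartialSum (n + 1) s = expPartialSum n s + s ^ n / n ! :=
  sum_range_succ _ n

theorem hasDerivAt_expPartialSum_succ (n : ℕ) (s : ℝ) :
    HasDerivAt (expPartialSum (n + 1)) (expPartialSum n s) s := by
  induction n with
  | zero =>
    have h1 : expPartialSum 1 = fun _ => 1 := by ext; simp [expPartialSum]
    simpa [h1, expPartialSum] using hasDerivAt_const s (1 : ℝ)
  | succ n ih =>
    have hterm : HasDerivAt (fun s : ℝ => s ^ (n + 1) / (n + 1)!) (s ^ n / n !) s := by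
      refine ((hasDerivAt_pow (n + 1) s).div_const ((n + 1)! : ℝ)).congr_deriv ?_
      rw [Nat.factorial_succ]; push_cast; field_simp
    rw [expPartialSum_succ]
    exact (ih.add hterm).congr_of_eventuallyEq
      (.of_forall fun t => expPartialSum_succ (n + 1) t)

def erlangTail (n : ℕ) (s : ℝ) : ℝ := exp (-s) * expPartialSum n s

theorem hasDerivAt_erlangTail_succ (n : ℕ) (s : ℝ) :
    HasDerivAt (erlangTail (n + 1)) (-(exp (-s) * s ^ n / n !)) s := by
  refine (((hasDerivAt_neg s).exp).mul (hasDerivAt_expPartialSum_succ n s)).congr_deriv ?_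
  rw [expPartialSum_succ]
  ring

theorem continuous_erlangTail (n : ℕ) : Continuous (erlangTail n) := by
  unfold erlangTail expPartialSum; fun_prop

theorem erlangTail_succ_zero (n : ℕ) : erlangTail (n + 1) 0 = 1 := by
  simp [erlangTail, expPartialSum, sum_range_succ']

theorem erlangTail_nonneg (n : ℕ) {s : ℝ} (hs : 0 ≤ s) : 0 ≤ erlangTail n s := by
  unfold erlangTail expPartialSum; positivity

theorem erlangTail_le_one (n : ℕ) {s : ℝ} (hs : 0 ≤ s) : erlangTail n s ≤ 1 :=
  calc erlangTail n s ≤ exp (-s) * exp s :=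
        mul_le_mul_of_nonneg_left (sum_le_exp_of_nonneg hs n) (exp_nonneg _)
    _ = 1 := by rw [← exp_add, neg_add_cancel, exp_zero]

theorem ProbabilityTheory.IndepFun.measure_min_le {S β : Type*} [MeasurableSpace S]
    {P : Measure S} [IsProbabilityMeasure P] [LinearOrder β] [TopologicalSpace β]
    [OrderClosedTopology β] [MeasurableSpace β] [OpensMeasurableSpace β] {X Y : S → β}
    (hXY : IndepFun X Y P) (hX : Measurable X) (hY : Measurable Y) (a : β) :
    P {ω | min (X ω) (Y ω) ≤ a} = 1 - P {ω | a < X ω} * P {ω | a < Y ω} := by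
  have hcompl : {ω | min (X ω) (Y ω) ≤ a} = (X ⁻¹' Ioi a ∩ Y ⁻¹' Ioi a)ᶜ := by
    ext ω
    simp [or_iff_not_imp_left]
  rw [hcompl, prob_compl_eq_one_sub ((hX measurableSet_Ioi).inter (hY measurableSet_Ioi)),
    hXY.measure_inter_preimage_eq_mul _ _ measurableSet_Ioi measurableSet_Ioi]
  rfl

theorem prob_lt_eq_ofReal_of_prob_le {S : Type*} [MeasurableSpace S] {P : Measure S}
    [IsProbabilityMeasure P] {X : S → ℝ} (hX : Measurable X) {a t : ℝ} (ht : t ≤ 1)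
    (h : P {ω | X ω ≤ a} = ENNReal.ofReal (1 - t)) :
    P {ω | a < X ω} = ENNReal.ofReal t := by
  have hcompl : {ω | a < X ω} = {ω | X ω ≤ a}ᶜ := by ext ω; simp
  rw [hcompl, prob_compl_eq_one_sub (measurableSet_le hX measurable_const), h,
    ← ENNReal.ofReal_one, ← ENNReal.ofReal_sub _ (by linarith), sub_sub_cancel]

theorem MeasureTheory.Measure.eq_withDensity_of_hasDerivAt_cdf {ν : Measure ℝ} [IsFiniteMeasure ν]
    {F f : ℝ → ℝ} (hF : ContinuousOn F (Ici 0)) (hF' : ∀ x, 0 < x → HasDerivAt F (f x) x)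
    (hf : ∀ x, 0 < x → 0 ≤ f x) (hν : ∀ a, 0 ≤ a → ν (Iic a) = ENNReal.ofReal (F a - F 0)) :
    ν = (volume.restrict (Ioi 0)).withDensity (fun x => ENNReal.ofReal (f x)) := by
  refine Measure.ext_of_Iic _ _ fun a => ?_
  rw [withDensity_apply _ measurableSet_Iic, Measure.restrict_restrict measurableSet_Iic,
    Iic_inter_Ioi]
  rcases le_or_gt a 0 with ha | ha
  · rw [Ioc_eq_empty ha.not_gt, Measure.restrict_empty, lintegral_zero_measure]
    refine measure_mono_null (Iic_subset_Iic.2 ha) ?_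
    simpa using hν 0 le_rfl
  · have hcont : ContinuousOn F (Icc 0 a) := hF.mono Icc_subset_Ici_self
    have hderiv : ∀ x ∈ Ioo 0 a, HasDerivAt F (f x) x := fun x hx => hF' x hx.1
    have hint : IntegrableOn f (Ioc 0 a) :=
      intervalIntegral.integrableOn_deriv_of_nonneg hcont hderiv fun x hx => hf x hx.1
    rw [hν a ha.le, ← ofReal_integral_eq_lintegral_ofReal hint
      ((ae_restrict_iff' measurableSet_Ioc).2 (.of_forall fun x hx => hf x hx.1)),
      ← intervalIntegral.integral_of_le ha.le,
      intervalIntegral.integral_eq_sub_of_hasDerivAt_of_le ha.le hcont hderiv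
        ((intervalIntegrable_iff_integrableOn_Ioc_of_le ha.le).2 hint)]

def alphaMuTail (α μ : ℕ) (Ω x : ℝ) : ℝ := erlangTail μ (μ * x ^ ((α : ℝ) / 2) / Ω ^ α)

def alphaMuPdf (α μ : ℕ) (Ω x : ℝ) : ℝ :=
  α * μ ^ μ * x ^ ((α * μ : ℝ) / 2 - 1) / (2 * Ω ^ (α * μ) * Gamma μ) *
    exp (-μ * x ^ ((α : ℝ) / 2) / Ω ^ α)

theorem alphaMuTail_eq (α μ : ℕ) (Ω : ℝ) {x : ℝ} (hx : 0 ≤ x) :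
    exp (-μ * x ^ ((α : ℝ) / 2) / Ω ^ α) *
        ∑ j ∈ range μ, (μ : ℝ) ^ j * x ^ ((j * α : ℝ) / 2) / (j ! * Ω ^ (j * α)) =
      alphaMuTail α μ Ω x := by
  rw [alphaMuTail, erlangTail, expPartialSum, neg_mul, neg_div]
  congr 1
  refine sum_congr rfl fun j _ => ?_
  rw [show (j * α : ℝ) / 2 = (α : ℝ) / 2 * j by ring, rpow_mul_natCast hx]
  ring

theorem alphaMuTail_zero {α μ : ℕ} (hα : 0 < α) (hμ : 0 < μ) (Ω : ℝ) :
    alphaMuTail α μ Ω 0 = 1 := by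
  obtain ⟨n, rfl⟩ := Nat.exists_eq_add_of_le' hμ
  rw [alphaMuTail, zero_rpow (by positivity), mul_zero, zero_div, erlangTail_succ_zero]

theorem alphaMuTail_nonneg (α μ : ℕ) {Ω x : ℝ} (hΩ : 0 ≤ Ω) (hx : 0 ≤ x) :
    0 ≤ alphaMuTail α μ Ω x :=
  erlangTail_nonneg μ (by positivity)

theorem alphaMuTail_le_one (α μ : ℕ) {Ω x : ℝ} (hΩ : 0 ≤ Ω) (hx : 0 ≤ x) :
    alphaMuTail α μ Ω x ≤ 1 :=
  erlangTail_le_one μ (by positivity)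

theorem continuous_alphaMuTail (α μ : ℕ) (Ω : ℝ) : Continuous (alphaMuTail α μ Ω) :=
  (continuous_erlangTail μ).comp
    ((continuous_const.mul (continuous_rpow_const (by positivity))).div_const _)

theorem hasDerivAt_alphaMuTail (α : ℕ) {μ : ℕ} (hμ : 0 < μ) {Ω x : ℝ} (hΩ : Ω ≠ 0)
    (hx : 0 < x) : HasDerivAt (alphaMuTail α μ Ω) (-alphaMuPdf α μ Ω x) x := by
  obtain ⟨n, rfl⟩ := Nat.exists_eq_add_of_le' hμ
  have hpow : HasDerivAt (fun x : ℝ => ((n + 1 : ℕ) : ℝ) * x ^ ((α : ℝ) / 2) / Ω ^ α)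
      (((n + 1 : ℕ) : ℝ) * ((α / 2) * x ^ ((α : ℝ) / 2 - 1)) / Ω ^ α) x :=
    ((hasDerivAt_rpow_const (Or.inl hx.ne')).const_mul _).div_const _
  refine ((hasDerivAt_erlangTail_succ n _).comp x hpow).congr_deriv ?_
  have hx_pow : x ^ ((α * (n + 1 : ℕ) : ℝ) / 2 - 1) =
      (x ^ ((α : ℝ) / 2)) ^ n * x ^ ((α : ℝ) / 2 - 1) := by
    rw [← rpow_mul_natCast hx.le, ← rpow_add hx]
    push_cast; ring_nf
  have hexp : -((n + 1 : ℕ) : ℝ) * x ^ ((α : ℝ) / 2) / Ω ^ α =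
      -(((n + 1 : ℕ) : ℝ) * x ^ ((α : ℝ) / 2) / Ω ^ α) := by ring
  have hΩα : Ω ^ α ≠ 0 := pow_ne_zero _ hΩ
  rw [alphaMuPdf, hx_pow, hexp, Nat.cast_add_one, Gamma_nat_eq_factorial, div_pow, mul_pow,
    pow_mul]
  field_simp
  ring

theorem alphaMuPdf_mul_alphaMuTail (α μ : ℕ) (Ωa Ωb : ℝ) {x : ℝ} (hx : 0 < x) :
    alphaMuPdf α μ Ωa x * alphaMuTail α μ Ωb x =
      α * exp (-μ * x ^ ((α : ℝ) / 2) * ((Ωa ^ α)⁻¹ + (Ωb ^ α)⁻¹)) /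
          (2 * Ωa ^ (α * μ) * Gamma μ) *
        ∑ m ∈ range μ,
          (μ : ℝ) ^ (μ + m) * x ^ ((α * (μ + m) : ℝ) / 2 - 1) / (m ! * Ωb ^ (m * α)) := by
  have hexp : exp (-μ * x ^ ((α : ℝ) / 2) * ((Ωa ^ α)⁻¹ + (Ωb ^ α)⁻¹)) =
      exp (-μ * x ^ ((α : ℝ) / 2) / Ωa ^ α) * exp (-(μ * x ^ ((α : ℝ) / 2) / Ωb ^ α)) := by
    rw [← exp_add]; ring_nf
  rw [alphaMuPdf, alphaMuTail, erlangTail, expPartialSum, hexp, mul_sum, mul_sum, mul_sum]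
  refine sum_congr rfl fun m _ => ?_
  have hx_pow : x ^ ((α * (μ + m) : ℝ) / 2 - 1) =
      x ^ ((α * μ : ℝ) / 2 - 1) * (x ^ ((α : ℝ) / 2)) ^ m := by
    rw [← rpow_mul_natCast hx.le, ← rpow_add hx]
    ring_nf
  rw [hx_pow, div_pow, mul_pow, mul_comm m α, pow_mul, pow_add]
  ring

def alphaMuMinPdf (α μ : ℕ) (Ωs Ωw x : ℝ) : ℝ :=
  α * exp (-μ * x ^ ((α : ℝ) / 2) * ((Ωs ^ α)⁻¹ + (Ωw ^ α)⁻¹)) / (2 * Ωs ^ (α * μ) * Gamma μ) *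
      ∑ m ∈ range μ, (μ : ℝ) ^ (μ + m) * x ^ ((α * (μ + m) : ℝ) / 2 - 1) / (m ! * Ωw ^ (m * α)) +
    α * exp (-μ * x ^ ((α : ℝ) / 2) * ((Ωs ^ α)⁻¹ + (Ωw ^ α)⁻¹)) / (2 * Ωw ^ (α * μ) * Gamma μ) *
      ∑ n ∈ range μ, (μ : ℝ) ^ (μ + n) * x ^ ((α * (μ + n) : ℝ) / 2 - 1) / (n ! * Ωs ^ (n * α))

theorem hasDerivAt_one_sub_alphaMuTail_mul (α : ℕ) {μ : ℕ} (hμ : 0 < μ) {Ωs Ωw x : ℝ}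
    (hΩs : Ωs ≠ 0) (hΩw : Ωw ≠ 0) (hx : 0 < x) :
    HasDerivAt (fun x => 1 - alphaMuTail α μ Ωs x * alphaMuTail α μ Ωw x)
      (alphaMuMinPdf α μ Ωs Ωw x) x := by
  refine (((hasDerivAt_alphaMuTail α hμ hΩs hx).mul
    (hasDerivAt_alphaMuTail α hμ hΩw hx)).const_sub 1).congr_deriv ?_
  rw [alphaMuMinPdf, ← alphaMuPdf_mul_alphaMuTail α μ Ωs Ωw hx, add_comm ((Ωs ^ α)⁻¹ : ℝ),
    ← alphaMuPdf_mul_alphaMuTail α μ Ωw Ωs hx]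
  ring

theorem alphaMuMinPdf_nonneg (α μ : ℕ) {Ωs Ωw x : ℝ} (hΩs : 0 < Ωs) (hΩw : 0 < Ωw)
    (hx : 0 < x) : 0 ≤ alphaMuMinPdf α μ Ωs Ωw x := by
  unfold alphaMuMinPdf
  positivity

end

theorem alphaMu_min_pdf_general {S : Type*} [MeasurableSpace S] (P : Measure S)
    [IsProbabilityMeasure P]
    (α μ : ℕ) (hα : 1 ≤ α) (hμ : 1 ≤ μ)
    (Ωs Ωw : ℝ) (hΩs : 0 < Ωs) (hΩw : 0 < Ωw)
    (gs gw : S → ℝ) (hms : Measurable gs) (hmw : Measurable gw)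
    (hindep : ProbabilityTheory.IndepFun gs gw P)
    (hcdfs : ∀ x : ℝ, 0 ≤ x → P {ω | gs ω ≤ x} =
      ENNReal.ofReal (1 - Real.exp (-(μ:ℝ) * x ^ ((α : ℝ) / 2) / Ωs ^ α) *
        ∑ j ∈ Finset.range μ, (μ:ℝ) ^ j * x ^ ((j * α : ℝ) / 2) / (j.factorial * Ωs ^ (j * α))))
    (hcdfw : ∀ x : ℝ, 0 ≤ x → P {ω | gw ω ≤ x} =
      ENNReal.ofReal (1 - Real.exp (-(μ:ℝ) * x ^ ((α : ℝ) / 2) / Ωw ^ α) *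
        ∑ j ∈ Finset.range μ, (μ:ℝ) ^ j * x ^ ((j * α : ℝ) / 2) / (j.factorial * Ωw ^ (j * α)))) :
    Measure.map (fun ω => min (gs ω) (gw ω)) P =
      (volume.restrict (Set.Ioi (0:ℝ))).withDensity (fun x => ENNReal.ofReal
        ((α * Real.exp (-(μ:ℝ) * x ^ ((α : ℝ) / 2) * ((Ωs ^ α)⁻¹ + (Ωw ^ α)⁻¹))) /
            (2 * Ωs ^ (α * μ) * Real.Gamma μ) *
          ∑ m ∈ Finset.range μ,
            (μ:ℝ) ^ (μ + m) * x ^ ((α * (μ + m) : ℝ) / 2 - 1) / (m.factorial * Ωw ^ (m * α)) +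
         (α * Real.exp (-(μ:ℝ) * x ^ ((α : ℝ) / 2) * ((Ωs ^ α)⁻¹ + (Ωw ^ α)⁻¹))) /
            (2 * Ωw ^ (α * μ) * Real.Gamma μ) *
          ∑ n ∈ Finset.range μ,
            (μ:ℝ) ^ (μ + n) * x ^ ((α * (μ + n) : ℝ) / 2 - 1) / (n.factorial * Ωs ^ (n * α)))) := by
  have hmin : Measurable fun ω => min (gs ω) (gw ω) := hms.min hmw
  have htail_s : ∀ a, 0 ≤ a → P {ω | a < gs ω} = ENNReal.ofReal (alphaMuTail α μ Ωs a) :=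
    fun a ha => prob_lt_eq_ofReal_of_prob_le hms (alphaMuTail_le_one α μ hΩs.le ha)
      (by rw [hcdfs a ha, alphaMuTail_eq α μ Ωs ha])
  have htail_w : ∀ a, 0 ≤ a → P {ω | a < gw ω} = ENNReal.ofReal (alphaMuTail α μ Ωw a) :=
    fun a ha => prob_lt_eq_ofReal_of_prob_le hmw (alphaMuTail_le_one α μ hΩw.le ha)
      (by rw [hcdfw a ha, alphaMuTail_eq α μ Ωw ha])
  refine Measure.eq_withDensity_of_hasDerivAt_cdf
    (F := fun x => 1 - alphaMuTail α μ Ωs x * alphaMuTail α μ Ωw x)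
    (f := alphaMuMinPdf α μ Ωs Ωw) (continuous_const.sub
      ((continuous_alphaMuTail α μ Ωs).mul (continuous_alphaMuTail α μ Ωw))).continuousOn
    (fun x hx => hasDerivAt_one_sub_alphaMuTail_mul α hμ hΩs.ne' hΩw.ne' hx)
    (fun x hx => alphaMuMinPdf_nonneg α μ hΩs hΩw hx) fun a ha => ?_
  rw [Measure.map_apply hmin measurableSet_Iic]
  change P {ω | min (gs ω) (gw ω) ≤ a} = _
  rw [hindep.measure_min_le hms hmw, htail_s a ha, htail_w a ha,
    ← ENNReal.ofReal_mul (alphaMuTail_nonneg α μ hΩs.le ha), ← ENNReal.ofReal_one,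
    ← ENNReal.ofReal_sub _ (mul_nonneg (alphaMuTail_nonneg α μ hΩs.le ha)
      (alphaMuTail_nonneg α μ hΩw.le ha)),
    alphaMuTail_zero hα hμ, alphaMuTail_zero hα hμ, mul_one, sub_self, sub_zero]

/-- The PDF of the minimum of two independent α-μ distributed channel gains. -/
theorem alphaMu_min_pdf {S : Type*} [MeasurableSpace S] (P : Measure S)
    [IsProbabilityMeasure P]
    (α μ : ℕ) (hα : 1 ≤ α) (hμ : 1 ≤ μ)
    (Ωs Ωw : ℝ) (hΩs : 0 < Ωs) (hΩw : 0 < Ωw)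
    (gs gw : S → ℝ) (hms : Measurable gs) (hmw : Measurable gw)
    (hindep : ProbabilityTheory.IndepFun gs gw P)
    (hposs : ∀ᵐ ω ∂P, 0 < gs ω) (hposw : ∀ᵐ ω ∂P, 0 < gw ω)
    (hcdfs : ∀ x : ℝ, 0 ≤ x → P {ω | gs ω ≤ x} =
      ENNReal.ofReal (1 - Real.exp (-(μ:ℝ) * x ^ ((α : ℝ) / 2) / Ωs ^ α) *
        ∑ j ∈ Finset.range μ, (μ:ℝ) ^ j * x ^ ((j * α : ℝ) / 2) / (j.factorial * Ωs ^ (j * α))))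
    (hcdfw : ∀ x : ℝ, 0 ≤ x → P {ω | gw ω ≤ x} =
      ENNReal.ofReal (1 - Real.exp (-(μ:ℝ) * x ^ ((α : ℝ) / 2) / Ωw ^ α) *
        ∑ j ∈ Finset.range μ, (μ:ℝ) ^ j * x ^ ((j * α : ℝ) / 2) / (j.factorial * Ωw ^ (j * α)))) :
    Measure.map (fun ω => min (gs ω) (gw ω)) P =
      (volume.restrict (Set.Ioi (0:ℝ))).withDensity (fun x => ENNReal.ofReal
        ((α * Real.exp (-(μ:ℝ) * x ^ ((α : ℝ) / 2) * ((Ωs ^ α)⁻¹ + (Ωw ^ α)⁻¹))) /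
            (2 * Ωs ^ (α * μ) * Real.Gamma μ) *
          ∑ m ∈ Finset.range μ,
            (μ:ℝ) ^ (μ + m) * x ^ ((α * (μ + m) : ℝ) / 2 - 1) / (m.factorial * Ωw ^ (m * α)) +
         (α * Real.exp (-(μ:ℝ) * x ^ ((α : ℝ) / 2) * ((Ωs ^ α)⁻¹ + (Ωw ^ α)⁻¹))) /
            (2 * Ωw ^ (α * μ) * Real.Gamma μ) *
          ∑ n ∈ Finset.range μ,
            (μ:ℝ) ^ (μ + n) * x ^ ((α * (μ + n) : ℝ) / 2 - 1) / (n.factorial * Ωs ^ (n * α)))) :=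
  alphaMu_min_pdf_general P α μ hα hμ Ωs Ωw hΩs hΩw gs gw hms hmw hindep hcdfs hcdfw
end

section
/- Let g_min = min{g_s, g_w} with g_s, g_w independent α-μ random variables (parameters α, μ ∈ ℤ₊, scales Ω_s, Ω_w > 0), and let Ω̃ = 1/(Ω_s^{−α} + Ω_w^{−α}). Then E[g_min] = (1/(Ω_s^{αμ} Γ(μ))) Σ_{m=0}^{μ−1} (Ω̃^{μ+m+2/α}/(m! μ^{2/α} Ω_w^{mα})) Γ(μ + m + 2/α) + (1/(Ω_w^{αμ} Γ(μ))) Σ_{n=0}^{μ−1} (Ω̃^{μ+n+2/α}/(n! μ^{2/α} Ω_s^{nα})) Γ(μ + n + 2/α). -/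
/-!
Each of the two symmetric terms of the PDF of `g_min` is a finite sum of generalized Gamma
densities `x ^ (q - 1) * exp (-(μ / Ω̃) * x ^ (α / 2))` with `q = α (μ + m) / 2`, so `x` times
it integrates term by term through
`∫₀^∞ x ^ q * exp (-b * x ^ p) = b ^ (-(q + 1) / p) Γ((q + 1) / p) / p`.
-/

open MeasureTheory Real Set

lemma integral_rpow_mul_exp_neg_mul_rpow_half {a k b : ℝ} (ha : 0 < a) (hk : 0 ≤ k)
    (hb : 0 < b) :
    ∫ x in Ioi (0:ℝ), x ^ (a * k / 2) * exp (-b * x ^ (a / 2))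
      = b ^ (-(k + 2 / a)) * (2 / a) * Gamma (k + 2 / a) := by
  have hexponent : (a * k / 2 + 1) / (a / 2) = k + 2 / a := by field_simp
  rw [integral_rpow_mul_exp_neg_mul_rpow (by positivity)
    (neg_one_lt_zero.trans_le (by positivity)) hb, neg_div, hexponent,
    one_div_div]

/-- One of the two symmetric terms of the PDF of `min g_s g_w`, with `Ω̃` written `T`, the scale
of the own variable `Ωt` and that of the other one `Ωo`. -/
noncomputable def alphaMuMinPdfPart (α μ : ℕ) (T Ωt Ωo x : ℝ) : ℝ :=
  (α * exp (-(μ:ℝ) * x ^ ((α : ℝ) / 2) / T)) / (2 * Ωt ^ (α * μ) * Gamma μ) *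
    ∑ m ∈ Finset.range μ,
      (μ:ℝ) ^ (μ + m) * x ^ ((α * (μ + m) : ℝ) / 2 - 1) / (m.factorial * Ωo ^ (m * α))

section PdfPart

variable (α μ : ℕ) (T Ωt Ωo : ℝ)

lemma mul_alphaMuMinPdfPart_eqOn :
    EqOn (fun x => x * alphaMuMinPdfPart α μ T Ωt Ωo x)
      (fun x => ∑ m ∈ Finset.range μ,
        (α / (2 * Ωt ^ (α * μ) * Gamma μ) * ((μ:ℝ) ^ (μ + m) / (m.factorial * Ωo ^ (m * α)))) *
          (x ^ ((α * (μ + m) : ℝ) / 2) * exp (-(μ / T) * x ^ ((α : ℝ) / 2))))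
      (Ioi 0) := by
  intro x hx
  simp only [alphaMuMinPdfPart, Finset.mul_sum]
  refine Finset.sum_congr rfl fun m _ => ?_
  have hpow : x ^ ((α * (μ + m) : ℝ) / 2 - 1) * x = x ^ ((α * (μ + m) : ℝ) / 2) := by
    rw [← rpow_add_one (ne_of_gt hx), sub_add_cancel]
  rw [← hpow, show -(μ:ℝ) * x ^ ((α : ℝ) / 2) / T = -(μ / T) * x ^ ((α : ℝ) / 2) by ring]
  ring

variable {α T}

lemma integrableOn_alphaMuMinPdfPart_term (hα : 0 < α) (hT : 0 < T) {m : ℕ} (hm : m < μ) :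
    IntegrableOn (fun x => x ^ ((α * (μ + m) : ℝ) / 2) * exp (-(μ / T) * x ^ ((α : ℝ) / 2)))
      (Ioi 0) := by
  have hμ : (0:ℝ) < μ := Nat.cast_pos.mpr (Nat.zero_lt_of_lt hm)
  exact integrableOn_rpow_mul_exp_neg_mul_rpow (neg_one_lt_zero.trans_le (by positivity))
    (by positivity) (by positivity)

lemma integrableOn_mul_alphaMuMinPdfPart (hα : 0 < α) (hT : 0 < T) :
    IntegrableOn (fun x => x * alphaMuMinPdfPart α μ T Ωt Ωo x) (Ioi 0) :=
  IntegrableOn.congr_fun (integrable_finsetSum _ fun _ hm =>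
    (integrableOn_alphaMuMinPdfPart_term μ hα hT (Finset.mem_range.mp hm)).const_mul _)
    (mul_alphaMuMinPdfPart_eqOn α μ T Ωt Ωo).symm measurableSet_Ioi

lemma integral_mul_alphaMuMinPdfPart (hα : 0 < α) (hT : 0 < T) :
    ∫ x in Ioi (0:ℝ), x * alphaMuMinPdfPart α μ T Ωt Ωo x
      = (1 / (Ωt ^ (α * μ) * Gamma μ)) * ∑ m ∈ Finset.range μ,
          (T ^ ((μ + m : ℝ) + 2 / α) / (m.factorial * (μ:ℝ) ^ ((2:ℝ) / α) * Ωo ^ (m * α))) *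
            Gamma ((μ:ℝ) + m + 2 / α) := by
  rw [setIntegral_congr_fun measurableSet_Ioi (mul_alphaMuMinPdfPart_eqOn α μ T Ωt Ωo),
    integral_finsetSum _ fun _ hm => ((integrableOn_alphaMuMinPdfPart_term μ hα hT
      (Finset.mem_range.mp hm)).const_mul _), Finset.mul_sum]
  refine Finset.sum_congr rfl fun m hm => ?_
  have hαR : (0:ℝ) < α := by exact_mod_cast hα
  have hμ : (0:ℝ) < μ := Nat.cast_pos.mpr (Nat.zero_lt_of_lt (Finset.mem_range.mp hm))
  have hscale : (μ:ℝ) ^ (μ + m) * (μ / T) ^ (-((μ + m : ℝ) + 2 / α))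
      = T ^ ((μ + m : ℝ) + 2 / α) / (μ:ℝ) ^ ((2:ℝ) / α) := by
    have hsplit : (μ:ℝ) ^ ((μ + m : ℝ) + 2 / α) = (μ:ℝ) ^ (μ + m) * (μ:ℝ) ^ ((2:ℝ) / α) := by
      rw [rpow_add hμ]
      norm_cast
    rw [rpow_neg (by positivity), div_rpow hμ.le hT.le, inv_div, hsplit]
    field_simp
  rw [integral_const_mul, integral_rpow_mul_exp_neg_mul_rpow_half hαR (by positivity)
    (by positivity)]
  calc _ = (α / 2 * (2 / α)) * ((μ:ℝ) ^ (μ + m) * (μ / T) ^ (-((μ + m : ℝ) + 2 / α))) *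
        (Gamma ((μ:ℝ) + m + 2 / α) / (Ωt ^ (α * μ) * Gamma μ * m.factorial * Ωo ^ (m * α))) := by
        ring
    _ = _ := by
      rw [hscale, div_mul_div_cancel₀ two_ne_zero, div_self hαR.ne', one_mul]
      ring

end PdfPart

theorem alphaMu_min_mean_general (α μ : ℕ) (hα : 1 ≤ α)
    (Ωs Ωw : ℝ) (hΩs : 0 < Ωs) (hΩw : 0 < Ωw) :
    ∫ x in Set.Ioi (0:ℝ),
      x * ((α * Real.exp (-(μ:ℝ) * x ^ ((α : ℝ) / 2) / (((Ωs ^ α)⁻¹ + (Ωw ^ α)⁻¹)⁻¹))) /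
            (2 * Ωs ^ (α * μ) * Real.Gamma μ) *
          ∑ m ∈ Finset.range μ,
            (μ:ℝ) ^ (μ + m) * x ^ ((α * (μ + m) : ℝ) / 2 - 1) / (m.factorial * Ωw ^ (m * α)) +
         (α * Real.exp (-(μ:ℝ) * x ^ ((α : ℝ) / 2) / (((Ωs ^ α)⁻¹ + (Ωw ^ α)⁻¹)⁻¹))) /
            (2 * Ωw ^ (α * μ) * Real.Gamma μ) *
          ∑ n ∈ Finset.range μ,
            (μ:ℝ) ^ (μ + n) * x ^ ((α * (μ + n) : ℝ) / 2 - 1) / (n.factorial * Ωs ^ (n * α)))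
    = (1 / (Ωs ^ (α * μ) * Real.Gamma μ)) *
        ∑ m ∈ Finset.range μ,
          (((Ωs ^ α)⁻¹ + (Ωw ^ α)⁻¹)⁻¹ ^ ((μ + m : ℝ) + 2 / α) /
            (m.factorial * (μ:ℝ) ^ ((2:ℝ)/α) * Ωw ^ (m * α))) *
          Real.Gamma ((μ:ℝ) + m + 2 / α) +
      (1 / (Ωw ^ (α * μ) * Real.Gamma μ)) *
        ∑ n ∈ Finset.range μ,
          (((Ωs ^ α)⁻¹ + (Ωw ^ α)⁻¹)⁻¹ ^ ((μ + n : ℝ) + 2 / α) /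
            (n.factorial * (μ:ℝ) ^ ((2:ℝ)/α) * Ωs ^ (n * α))) *
          Real.Gamma ((μ:ℝ) + n + 2 / α) := by
  have hT : 0 < ((Ωs ^ α)⁻¹ + (Ωw ^ α)⁻¹)⁻¹ := by positivity
  change ∫ x in Ioi (0:ℝ), x * (alphaMuMinPdfPart α μ _ Ωs Ωw x + alphaMuMinPdfPart α μ _ Ωw Ωs x)
    = _
  simp_rw [mul_add]
  rw [integral_add (integrableOn_mul_alphaMuMinPdfPart μ Ωs Ωw hα hT)
      (integrableOn_mul_alphaMuMinPdfPart μ Ωw Ωs hα hT),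
    integral_mul_alphaMuMinPdfPart μ Ωs Ωw hα hT, integral_mul_alphaMuMinPdfPart μ Ωw Ωs hα hT]

/-- Mean of `g_min = min{g_s, g_w}` computed from its PDF (Ω̃ = 1/(Ωs^{−α}+Ωw^{−α})). -/
theorem alphaMu_min_mean (α μ : ℕ) (hα : 1 ≤ α) (hμ : 1 ≤ μ)
    (Ωs Ωw : ℝ) (hΩs : 0 < Ωs) (hΩw : 0 < Ωw) :
    ∫ x in Set.Ioi (0:ℝ),
      x * ((α * Real.exp (-(μ:ℝ) * x ^ ((α : ℝ) / 2) / (((Ωs ^ α)⁻¹ + (Ωw ^ α)⁻¹)⁻¹))) /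
            (2 * Ωs ^ (α * μ) * Real.Gamma μ) *
          ∑ m ∈ Finset.range μ,
            (μ:ℝ) ^ (μ + m) * x ^ ((α * (μ + m) : ℝ) / 2 - 1) / (m.factorial * Ωw ^ (m * α)) +
         (α * Real.exp (-(μ:ℝ) * x ^ ((α : ℝ) / 2) / (((Ωs ^ α)⁻¹ + (Ωw ^ α)⁻¹)⁻¹))) /
            (2 * Ωw ^ (α * μ) * Real.Gamma μ) *
          ∑ n ∈ Finset.range μ,
            (μ:ℝ) ^ (μ + n) * x ^ ((α * (μ + n) : ℝ) / 2 - 1) / (n.factorial * Ωs ^ (n * α)))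
    = (1 / (Ωs ^ (α * μ) * Real.Gamma μ)) *
        ∑ m ∈ Finset.range μ,
          (((Ωs ^ α)⁻¹ + (Ωw ^ α)⁻¹)⁻¹ ^ ((μ + m : ℝ) + 2 / α) /
            (m.factorial * (μ:ℝ) ^ ((2:ℝ)/α) * Ωw ^ (m * α))) *
          Real.Gamma ((μ:ℝ) + m + 2 / α) +
      (1 / (Ωw ^ (α * μ) * Real.Gamma μ)) *
        ∑ n ∈ Finset.range μ,
          (((Ωs ^ α)⁻¹ + (Ωw ^ α)⁻¹)⁻¹ ^ ((μ + n : ℝ) + 2 / α) /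
            (n.factorial * (μ:ℝ) ^ ((2:ℝ)/α) * Ωs ^ (n * α))) *
          Real.Gamma ((μ:ℝ) + n + 2 / α) :=
  alphaMu_min_mean_general α μ hα Ωs Ωw hΩs hΩw
end

section
/- With R″(0) < 0 given by R″(0) = log₂(e) a² [ν (E[g])² − (ν+1) E[g²]] and R′(0) = log₂(e) a E[g] for a non-degenerate nonnegative g (so Var(g) > 0), the wideband slope S₀ = −2 (R′(0))² ln 2 / R″(0) = 2 (E[g])² / ((ν+1) E[g²] − ν (E[g])²) is strictly decreasing in ν > 0 and tends to 0 as ν → ∞, while the minimum energy per bit 1/R′(0) does not depend on ν. -/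
open Filter

/-- Wideband slope `S₀ = −2(R′(0))² ln 2 / R″(0) = 2(E[g])²/((ν+1)E[g²] − ν(E[g])²)` is
strictly decreasing in ν > 0 and tends to 0 as ν → ∞; the minimum energy per bit
`1/R′(0)` does not depend on ν. -/
theorem widebandSlope_properties (a Eg Eg2 : ℝ) (ha : 0 < a) (hEg : 0 < Eg)
    (hvar : Eg ^ 2 < Eg2) :
    (∀ ν : ℝ, 0 < ν →
      -2 * ((Real.log 2)⁻¹ * a * Eg) ^ 2 * Real.log 2 /
          ((Real.log 2)⁻¹ * a ^ 2 * (ν * Eg ^ 2 - (ν + 1) * Eg2))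
        = 2 * Eg ^ 2 / ((ν + 1) * Eg2 - ν * Eg ^ 2)) ∧
    StrictAntiOn (fun ν : ℝ => 2 * Eg ^ 2 / ((ν + 1) * Eg2 - ν * Eg ^ 2)) (Set.Ioi 0) ∧
    Tendsto (fun ν : ℝ => 2 * Eg ^ 2 / ((ν + 1) * Eg2 - ν * Eg ^ 2)) atTop (nhds 0) ∧
    (∀ ν₁ ν₂ : ℝ, 0 < ν₁ → 0 < ν₂ →
      (1 : ℝ) / ((Real.log 2)⁻¹ * a * Eg) = 1 / ((Real.log 2)⁻¹ * a * Eg)) := by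
  have hlog : (0 : ℝ) < Real.log 2 := Real.log_pos (by norm_num)
  have hden : ∀ ν : ℝ, 0 < ν → 0 < (ν + 1) * Eg2 - ν * Eg ^ 2 := by
    intro ν hν
    have h2 : 0 < Eg2 := lt_trans (by positivity) hvar
    nlinarith
  refine ⟨?_, ?_, ?_, fun _ _ _ _ => rfl⟩
  · intro ν hν
    have h := hden ν hν
    have hne : (ν + 1) * Eg2 - ν * Eg ^ 2 ≠ 0 := ne_of_gt h
    have hne2 : (Real.log 2)⁻¹ * a ^ 2 * (ν * Eg ^ 2 - (ν + 1) * Eg2) ≠ 0 := by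
      have h3 : ν * Eg ^ 2 - (ν + 1) * Eg2 < 0 := by linarith
      have h4 : (0:ℝ) < (Real.log 2)⁻¹ * a ^ 2 := by positivity
      exact mul_ne_zero (ne_of_gt h4) (ne_of_lt h3)
    rw [div_eq_div_iff hne2 hne]
    have hl : Real.log 2 ≠ 0 := ne_of_gt hlog
    field_simp
    ring
  · intro x hx y hy hxy
    have hdx := hden x hx
    have hdy := hden y hy
    have hmono : (x + 1) * Eg2 - x * Eg ^ 2 < (y + 1) * Eg2 - y * Eg ^ 2 := by
      nlinarith
    exact div_lt_div_of_pos_left (by positivity) hdx hmono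
  · have h1 : Tendsto (fun ν : ℝ => (ν + 1) * Eg2 - ν * Eg ^ 2) atTop atTop := by
      have : (fun ν : ℝ => (ν + 1) * Eg2 - ν * Eg ^ 2)
          = fun ν : ℝ => ν * (Eg2 - Eg ^ 2) + Eg2 := by funext ν; ring
      rw [this]
      exact (tendsto_atTop_add_const_right _ _
        (Tendsto.atTop_mul_const (by linarith) tendsto_id))
    exact tendsto_const_nhds.div_atTop h1
end

section
/- Fix ν > 0 and a_s ∈ (0,1) with a_w = 1 − a_s. For any nonnegative random variable g with P(g > 0) = 1, lim_{ρ → ∞} −(1/ν) log₂ E[((1 + ρ g)/(1 + a_s ρ g))^{−ν}] = log₂(1 + a_w/a_s) = log₂(1/a_s). -/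
open MeasureTheory Real Filter

/-!
The ratio `(1 + ρ g)/(1 + a_s ρ g)` tends to `1 / a_s` wherever `g > 0`, and for `ρ ≥ 0` it is at
least `1`, so its `(-ν)`-th power is dominated by the constant `1`. Dominated convergence gives
`E[ratio ^ (-ν)] → a_s ^ ν`, and `-(1/ν) log₂ (a_s ^ ν) = log₂ (1 / a_s)`.
-/

lemma one_le_one_add_div_one_add_mul {a t : ℝ} (ha₀ : 0 ≤ a) (ha₁ : a ≤ 1) (ht : 0 ≤ t) :
    1 ≤ (1 + t) / (1 + a * t) := by
  rw [one_le_div₀ (by positivity)]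
  nlinarith

lemma tendsto_one_add_mul_div_one_add_mul_atTop {a x : ℝ} (ha : a ≠ 0) (hx : x ≠ 0) :
    Tendsto (fun ρ : ℝ => (1 + ρ * x) / (1 + a * ρ * x)) atTop (nhds a⁻¹) := by
  have hinv : Tendsto (fun ρ : ℝ => 1 / ρ) atTop (nhds 0) := by
    simpa [one_div] using tendsto_inv_atTop_zero
  have key : Tendsto (fun ρ : ℝ => (1 / ρ + x) / (1 / ρ + a * x)) atTop
      (nhds ((0 + x) / (0 + a * x))) :=
    (hinv.add tendsto_const_nhds).div (hinv.add tendsto_const_nhds) (by simp [ha, hx])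
  rw [zero_add, zero_add, div_mul_cancel_right₀ hx] at key
  refine key.congr' ?_
  filter_upwards [eventually_gt_atTop (0 : ℝ)] with ρ hρ
  rw [← mul_div_mul_left _ _ hρ.ne']
  congr 1 <;> field_simp

lemma tendsto_integral_one_add_mul_div_one_add_mul_rpow_neg {S : Type*} [MeasurableSpace S]
    (P : Measure S) [IsProbabilityMeasure P] {ν a : ℝ} (hν : 0 ≤ ν) (ha₀ : 0 < a) (ha₁ : a ≤ 1)
    {g : S → ℝ} (hm : Measurable g) (hpos : ∀ᵐ ω ∂P, 0 < g ω) :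
    Tendsto (fun ρ : ℝ => ∫ ω, ((1 + ρ * g ω) / (1 + a * ρ * g ω)) ^ (-ν) ∂P)
      atTop (nhds (a ^ ν)) := by
  have hconst : ∫ _ : S, a ^ ν ∂P = a ^ ν := by simp
  rw [← hconst]
  refine tendsto_integral_filter_of_dominated_convergence (fun _ => 1)
    (.of_forall fun ρ => (by fun_prop : Measurable _).aestronglyMeasurable) ?_
    (integrable_const 1) ?_
  · filter_upwards [eventually_ge_atTop 0] with ρ hρ
    filter_upwards [hpos] with ω hω
    have hratio := one_le_one_add_div_one_add_mul ha₀.le ha₁ (mul_nonneg hρ hω.le)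
    rw [mul_assoc, norm_of_nonneg (rpow_nonneg (zero_le_one.trans hratio) _)]
    exact rpow_le_one_of_one_le_of_nonpos hratio (neg_nonpos.mpr hν)
  · filter_upwards [hpos] with ω hω
    have hlim := (tendsto_one_add_mul_div_one_add_mul_atTop ha₀.ne' hω.ne').rpow_const
      (p := -ν) (.inl (by positivity))
    rwa [inv_rpow ha₀.le, rpow_neg ha₀.le, inv_inv] at hlim

lemma neg_one_div_mul_logb_rpow {b a ν : ℝ} (ha : 0 < a) (hν : ν ≠ 0) :
    -(1 / ν) * logb b (a ^ ν) = logb b (1 / a) := by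
  rw [logb, logb, log_rpow ha, one_div a, log_inv]
  field_simp

/-- High-SNR limit of the weak user's effective rate in downlink NOMA:
`R_w(ρ) → log₂(1 + a_w/a_s)` as `ρ → ∞`. -/
theorem weakUser_effectiveRate_highSNR_limit {S : Type*} [MeasurableSpace S] (P : Measure S)
    [IsProbabilityMeasure P] (ν : ℝ) (hν : 0 < ν)
    (as : ℝ) (has : 0 < as) (has1 : as < 1)
    (g : S → ℝ) (hm : Measurable g) (hpos : ∀ᵐ ω ∂P, 0 < g ω) :
    Tendsto (fun ρ : ℝ => -(1 / ν) * Real.logb 2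
        (∫ ω, ((1 + ρ * g ω) / (1 + as * ρ * g ω)) ^ (-ν) ∂P))
      atTop (nhds (Real.logb 2 (1 + (1 - as) / as))) := by
  have hint := tendsto_integral_one_add_mul_div_one_add_mul_rpow_neg P hν.le has has1.le hm hpos
  have hcont : ContinuousAt (fun x : ℝ => -(1 / ν) * logb 2 x) (as ^ ν) :=
    (continuousAt_logb (by positivity)).const_mul _
  have hlimit : 1 + (1 - as) / as = 1 / as := by field_simp; ring
  rw [hlimit, ← neg_one_div_mul_logb_rpow has hν.ne']
  exact hcont.tendsto.comp hint
end

section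
/- Let g be α-μ distributed with integer α, μ ≥ 1, scale Ω > 0, and let ν > 0 satisfy αμ > 2ν. Then lim_{ρ → ∞} [−(1/ν) log₂ E[(1 + aρg)^{−ν}] − log₂(aρ)] = −(1/ν) log₂[(μ^{1/α}/Ω)^{2ν} Γ(μ − 2ν/α)/Γ(μ)], for any fixed a > 0. -/
/-! For `t > 0`, `t ^ ν * (1 + t * g) ^ (-ν) = (t⁻¹ + g) ^ (-ν)` increases to `g ^ (-ν)` as
`t → ∞`, so by dominated convergence `t ^ ν * E[(1 + t * g) ^ (-ν)] → E[g ^ (-ν)]`, a finite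
negative moment because `αμ > 2ν`. The substitution `u = x ^ (α / 2)` turns that moment into a
Gamma integral; applying `-(1/ν) log₂` with `t = aρ` gives the limit. -/

open MeasureTheory Real Filter Set Topology

theorem rpow_mul_one_add_mul_rpow_neg {t x : ℝ} (ht : 0 < t) (hx : 0 ≤ x) (ν : ℝ) :
    t ^ ν * (1 + t * x) ^ (-ν) = (t⁻¹ + x) ^ (-ν) := by
  rw [show t⁻¹ + x = (1 + t * x) / t by field_simp, div_rpow (by positivity) ht.le,
    rpow_neg ht.le, div_inv_eq_mul, mul_comm]

section DominatedLimit

variable {P : Measure ℝ} {f : ℝ → ℝ} {ν : ℝ}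

theorem aestronglyMeasurable_of_integrable_rpow_neg_mul (hpos : ∀ᵐ x ∂P, 0 < x)
    (hint : Integrable (fun x => x ^ (-ν) * f x) P) : AEStronglyMeasurable f P := by
  refine ((measurable_id.pow_const ν).aestronglyMeasurable.mul hint.1).congr ?_
  filter_upwards [hpos] with x hx
  change x ^ ν * (x ^ (-ν) * f x) = f x
  rw [← mul_assoc, ← rpow_add hx, add_neg_cancel, rpow_zero, one_mul]

theorem tendsto_integral_inv_add_rpow_neg_mul (hpos : ∀ᵐ x ∂P, 0 < x) (hν : 0 ≤ ν)
    (hint : Integrable (fun x => x ^ (-ν) * f x) P) :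
    Tendsto (fun t => ∫ x, (t⁻¹ + x) ^ (-ν) * f x ∂P) atTop (𝓝 (∫ x, x ^ (-ν) * f x ∂P)) := by
  have hf := aestronglyMeasurable_of_integrable_rpow_neg_mul hpos hint
  refine tendsto_integral_filter_of_dominated_convergence _ (Eventually.of_forall fun t =>
      ((measurable_const.add measurable_id).pow_const _).aestronglyMeasurable.mul hf) ?_
    hint.norm ?_
  · filter_upwards [eventually_gt_atTop 0] with t ht
    filter_upwards [hpos] with x hx
    have hbase : 0 < t⁻¹ + x := by positivity
    rw [norm_mul, norm_mul, norm_of_nonneg (rpow_nonneg hbase.le _),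
      norm_of_nonneg (rpow_nonneg hx.le _)]
    gcongr ?_ * _
    exact rpow_le_rpow_of_nonpos hx (by linarith [inv_pos.2 ht]) (by linarith)
  · filter_upwards [hpos] with x hx
    have hbase : Tendsto (fun t : ℝ => t⁻¹ + x) atTop (𝓝 x) := by
      simpa using tendsto_inv_atTop_zero.add_const x
    exact ((continuousAt_rpow_const x (-ν) (Or.inl hx.ne')).tendsto.comp hbase).mul_const _

theorem tendsto_rpow_mul_integral_one_add_mul_rpow_neg (hpos : ∀ᵐ x ∂P, 0 < x) (hν : 0 ≤ ν)
    (hint : Integrable (fun x => x ^ (-ν) * f x) P) :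
    Tendsto (fun t => t ^ ν * ∫ x, (1 + t * x) ^ (-ν) * f x ∂P) atTop
      (𝓝 (∫ x, x ^ (-ν) * f x ∂P)) := by
  refine (tendsto_integral_inv_add_rpow_neg_mul hpos hν hint).congr' ?_
  filter_upwards [eventually_gt_atTop 0] with t ht
  rw [← integral_const_mul]
  refine integral_congr_ae ?_
  filter_upwards [hpos] with x hx
  rw [← mul_assoc, rpow_mul_one_add_mul_rpow_neg ht hx.le]

end DominatedLimit

theorem tendsto_neg_inv_mul_logb_sub_logb {F : ℝ → ℝ} {ν L : ℝ} (b : ℝ) (hν : ν ≠ 0)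
    (hL : L ≠ 0) (hF : Tendsto (fun t => t ^ ν * F t) atTop (𝓝 L)) :
    Tendsto (fun t => -(1 / ν) * logb b (F t) - logb b t) atTop (𝓝 (-(1 / ν) * logb b L)) := by
  refine (((continuousAt_logb hL).tendsto.comp hF).const_mul (-(1 / ν))).congr' ?_
  filter_upwards [eventually_gt_atTop 0, hF.eventually_ne hL] with t ht hFt
  have hFt : F t ≠ 0 := right_ne_zero_of_mul hFt
  simp only [Function.comp_apply]
  rw [logb_mul (rpow_pos_of_pos ht ν).ne' hFt, logb_rpow_eq_mul_logb_of_pos ht]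
  field_simp
  ring

noncomputable def alphaMuPDF (α μ : ℕ) (Ω x : ℝ) : ℝ :=
  (α * (μ:ℝ) ^ μ * x ^ ((α * μ : ℝ) / 2 - 1)) / (2 * Ω ^ (α * μ) * Gamma μ) *
    exp (-(μ:ℝ) * x ^ ((α : ℝ) / 2) / Ω ^ α)

section AlphaMu

variable {α μ : ℕ} {Ω : ℝ}

theorem rpow_neg_mul_alphaMuPDF {x : ℝ} (hx : 0 < x) (ν : ℝ) :
    x ^ (-ν) * alphaMuPDF α μ Ω x
      = α * (μ:ℝ) ^ μ / (2 * Ω ^ (α * μ) * Gamma μ) *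
        (x ^ ((α * μ : ℝ) / 2 - ν - 1) * exp (-(μ / Ω ^ α) * x ^ ((α : ℝ) / 2))) := by
  rw [alphaMuPDF, show (α * μ : ℝ) / 2 - ν - 1 = -ν + ((α * μ : ℝ) / 2 - 1) by ring,
    rpow_add hx,
    show -(μ:ℝ) * x ^ ((α : ℝ) / 2) / Ω ^ α = -(μ / Ω ^ α) * x ^ ((α : ℝ) / 2) by ring]
  ring

theorem alphaMu_moment_constant (hα : 0 < α) (hμ : 0 < μ) (hΩ : 0 < Ω) (ν : ℝ) :
    α * (μ:ℝ) ^ μ / (2 * Ω ^ (α * μ)) * ((μ / Ω ^ α) ^ (-(μ - 2 * ν / α)) * (1 / (α / 2)))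
      = ((μ:ℝ) ^ ((1:ℝ) / α) / Ω) ^ (2 * ν) := by
  have hα' : (α:ℝ) ≠ 0 := by positivity
  have hμ' : (0:ℝ) < μ := by exact_mod_cast hμ
  have hb : ((μ:ℝ) / Ω ^ α) ^ (-(μ - 2 * ν / α))
      = (μ:ℝ) ^ (2 * ν / α) / (μ:ℝ) ^ μ * (Ω ^ (α * μ) / Ω ^ (2 * ν)) := by
    rw [div_rpow hμ'.le (by positivity), ← rpow_natCast_mul hΩ.le, neg_sub, rpow_sub hμ',
      show (α:ℝ) * (2 * ν / α - μ) = 2 * ν - (α * μ : ℕ) by push_cast; field_simp,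
      rpow_sub hΩ, rpow_natCast, rpow_natCast]
    field_simp
  have hK : ((μ:ℝ) ^ ((1:ℝ) / α) / Ω) ^ (2 * ν) = (μ:ℝ) ^ (2 * ν / α) / Ω ^ (2 * ν) := by
    rw [div_rpow (by positivity) hΩ.le, ← rpow_mul hμ'.le]
    ring_nf
  rw [hb, hK]
  field_simp

theorem integrableOn_rpow_neg_mul_alphaMuPDF (hα : 0 < α) (hμ : 0 < μ) (hΩ : 0 < Ω) {ν : ℝ}
    (hν : 2 * ν < α * μ) :
    IntegrableOn (fun x => x ^ (-ν) * alphaMuPDF α μ Ω x) (Ioi 0) :=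
  IntegrableOn.congr_fun
    ((integrableOn_rpow_mul_exp_neg_mul_rpow (s := (α * μ : ℝ) / 2 - ν - 1) (p := (α : ℝ) / 2)
      (b := μ / Ω ^ α) (by linarith) (by positivity) (by positivity)).const_mul _)
    (fun _ hx => (rpow_neg_mul_alphaMuPDF hx ν).symm) measurableSet_Ioi

theorem integral_rpow_neg_mul_alphaMuPDF (hα : 0 < α) (hμ : 0 < μ) (hΩ : 0 < Ω) {ν : ℝ}
    (hν : 2 * ν < α * μ) :
    ∫ x in Ioi 0, x ^ (-ν) * alphaMuPDF α μ Ω x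
      = ((μ:ℝ) ^ ((1:ℝ) / α) / Ω) ^ (2 * ν) * (Gamma ((μ:ℝ) - 2 * ν / α) / Gamma μ) := by
  have hα' : (α:ℝ) ≠ 0 := by positivity
  rw [setIntegral_congr_fun measurableSet_Ioi (fun _ hx => rpow_neg_mul_alphaMuPDF hx ν),
    integral_const_mul, integral_rpow_mul_exp_neg_mul_rpow (by positivity) (by linarith)
      (by positivity), neg_div,
    show ((α * μ : ℝ) / 2 - ν - 1 + 1) / (α / 2) = μ - 2 * ν / α by field_simp; ring,
    ← alphaMu_moment_constant hα hμ hΩ ν]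
  ring

end AlphaMu

theorem strongUser_effectiveRate_highSNR_general (α μ : ℕ)
    (Ω : ℝ) (hΩ : 0 < Ω) (ν : ℝ) (hν : 0 < ν) (hνc : (2:ℝ) * ν < α * μ)
    (a : ℝ) (ha : 0 < a) :
    Tendsto (fun ρ : ℝ =>
        -(1 / ν) * Real.logb 2
          (∫ x in Set.Ioi (0:ℝ),
            (1 + a * ρ * x) ^ (-ν) *
              ((α * (μ:ℝ) ^ μ * x ^ ((α * μ : ℝ) / 2 - 1)) / (2 * Ω ^ (α * μ) * Real.Gamma μ) *
                Real.exp (-(μ:ℝ) * x ^ ((α : ℝ) / 2) / Ω ^ α)))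
          - Real.logb 2 (a * ρ))
      atTop
      (nhds (-(1 / ν) * Real.logb 2
        (((μ:ℝ) ^ ((1:ℝ)/α) / Ω) ^ (2 * ν) *
          (Real.Gamma ((μ:ℝ) - 2 * ν / α) / Real.Gamma μ)))) := by
  obtain ⟨hα, hμ⟩ : 0 < α ∧ 0 < μ :=
    CanonicallyOrderedAdd.mul_pos.mp (by exact_mod_cast (by linarith : (0:ℝ) < α * μ))
  have hmoment_pos : 0 < ((μ:ℝ) ^ ((1:ℝ) / α) / Ω) ^ (2 * ν) *
      (Gamma ((μ:ℝ) - 2 * ν / α) / Gamma μ) := by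
    have hs : 0 < (μ:ℝ) - 2 * ν / α := sub_pos.2 ((div_lt_iff₀ (by positivity)).2 (by linarith))
    have := Gamma_pos_of_pos hs
    have := Gamma_pos_of_pos (Nat.cast_pos.2 hμ : (0:ℝ) < μ)
    positivity
  have hlim := tendsto_rpow_mul_integral_one_add_mul_rpow_neg (P := volume.restrict (Ioi 0))
    (ae_restrict_mem measurableSet_Ioi) hν.le (integrableOn_rpow_neg_mul_alphaMuPDF hα hμ hΩ hνc)
  rw [integral_rpow_neg_mul_alphaMuPDF hα hμ hΩ hνc] at hlim
  exact (tendsto_neg_inv_mul_logb_sub_logb 2 hν.ne' hmoment_pos.ne' hlim).comp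
    (tendsto_id.const_mul_atTop ha)

/-- High-SNR approximation of the strong user's effective rate over α-μ fading:
`R(ρ) − log₂(aρ) → −(1/ν) log₂[(μ^{1/α}/Ω)^{2ν} Γ(μ − 2ν/α)/Γ(μ)]` as `ρ → ∞`. -/
theorem strongUser_effectiveRate_highSNR (α μ : ℕ) (hα : 1 ≤ α) (hμ : 1 ≤ μ)
    (Ω : ℝ) (hΩ : 0 < Ω) (ν : ℝ) (hν : 0 < ν) (hνc : (2:ℝ) * ν < α * μ)
    (a : ℝ) (ha : 0 < a) :
    Tendsto (fun ρ : ℝ =>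
        -(1 / ν) * Real.logb 2
          (∫ x in Set.Ioi (0:ℝ),
            (1 + a * ρ * x) ^ (-ν) *
              ((α * (μ:ℝ) ^ μ * x ^ ((α * μ : ℝ) / 2 - 1)) / (2 * Ω ^ (α * μ) * Real.Gamma μ) *
                Real.exp (-(μ:ℝ) * x ^ ((α : ℝ) / 2) / Ω ^ α)))
          - Real.logb 2 (a * ρ))
      atTop
      (nhds (-(1 / ν) * Real.logb 2
        (((μ:ℝ) ^ ((1:ℝ)/α) / Ω) ^ (2 * ν) *
          (Real.Gamma ((μ:ℝ) - 2 * ν / α) / Real.Gamma μ)))) :=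
  strongUser_effectiveRate_highSNR_general α μ Ω hΩ ν hν hνc a ha
end
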